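/- arXiv:1009.6158 — 4 statements merged into one kernel-verified Lean document; each statement's English description precedes it below -/
import Mathlib

section
/- In the n-th Birkhoff polytope P_n (the polytope of doubly stochastic n×n matrices), the n permutation matrices corresponding to the powers of the cyclic permutation (1 2 ⋯ n) span a special (n−1)-simplex: every facet of P_n, which is of the form {X ∈ P_n : x_{ij} = 0}, contains exactly n−1 of these n matrices. -/
open Set

/-- The Birkhoff polytope: doubly stochastic `n × n` matrices. -/
def birkhoff (n : ℕ) : Set (Matrix (Fin n) (Fin n) ℝ) :=
  {M | (∀ i j, 0 ≤ M i j) ∧ (∀ i, ∑ j, M i j = 1) ∧ (∀ j, ∑ i, M i j = 1)}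

/-- The permutation matrices of the powers of the cycle `(1 2 ⋯ n)`. -/
def cyclicPermMatrix (n : ℕ) (k : Fin (n + 1)) : Matrix (Fin (n + 1)) (Fin (n + 1)) ℝ :=
  Matrix.of fun i j => if (finRotate (n + 1) ^ (k : ℕ)) i = j then 1 else 0

/-! The `k`-th power of the rotation is `i ↦ i + k` in `Fin (n + 1)`, so entry `(i, j)` of the
`k`-th cyclic permutation matrix is nonzero exactly when `k = j - i`. -/

open Matrix Fin.NatCast

lemma finRotate_pow_apply (n k : ℕ) (i : Fin (n + 1)) :
    (finRotate (n + 1) ^ k) i = i + k := by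
  induction k generalizing i with
  | zero => simp
  | succ k ih =>
    rw [pow_succ, Equiv.Perm.mul_apply, finRotate_apply, ih, add_right_comm, add_assoc,
      Nat.cast_succ]

lemma birkhoff_eq_doublyStochastic (n : ℕ) : birkhoff n = doublyStochastic ℝ (Fin n) := by
  ext M
  exact mem_doublyStochastic_iff_sum.symm

lemma cyclicPermMatrix_eq_permMatrix (n : ℕ) (k : Fin (n + 1)) :
    cyclicPermMatrix n k = (finRotate (n + 1) ^ (k : ℕ)).permMatrix ℝ := by
  ext i j
  simp [cyclicPermMatrix, Equiv.toPEquiv_apply]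

lemma cyclicPermMatrix_mem_birkhoff (n : ℕ) (k : Fin (n + 1)) :
    cyclicPermMatrix n k ∈ birkhoff (n + 1) := by
  rw [cyclicPermMatrix_eq_permMatrix, birkhoff_eq_doublyStochastic]
  exact permMatrix_mem_doublyStochastic

lemma cyclicPermMatrix_apply_ne_zero_iff (n : ℕ) (k i j : Fin (n + 1)) :
    cyclicPermMatrix n k i j ≠ 0 ↔ k = j - i := by
  simp [cyclicPermMatrix, finRotate_pow_apply, eq_sub_iff_add_eq']

/-- In the Birkhoff polytope `P_{n+1}`, the `n+1` permutation matrices corresponding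
to the powers of the cyclic permutation are members of the polytope, and every facet
`{X ∈ P_{n+1} : X i j = 0}` contains all but exactly one of them (exactly one `k`
has `(v k) i j ≠ 0`), i.e. they span a special simplex. -/
theorem birkhoff_special_simplex (n : ℕ) :
    (∀ k : Fin (n + 1), cyclicPermMatrix n k ∈ birkhoff (n + 1)) ∧
    ∀ i j : Fin (n + 1), ∃! k : Fin (n + 1), cyclicPermMatrix n k ∉
      {X ∈ birkhoff (n + 1) | X i j = 0} := by
  refine ⟨cyclicPermMatrix_mem_birkhoff n, fun i j => ?_⟩
  have off_facet_iff (k : Fin (n + 1)) :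
      cyclicPermMatrix n k ∉ {X ∈ birkhoff (n + 1) | X i j = 0} ↔ k = j - i := by
    rw [mem_sep_iff, not_and, ← cyclicPermMatrix_apply_ne_zero_iff]
    exact imp_iff_right (cyclicPermMatrix_mem_birkhoff n k)
  simp_rw [off_facet_iff]
  exact existsUnique_eq
end

section
/- Let P be a centrally symmetric polytope that is weakly Hannar, i.e. for every facet F of P one has P = conv(V(F) ∪ V(−F)), where V denotes vertex set. Then for every vertex x of P, the pair {x, −x} forms a special 1-simplex: every facet of P contains exactly one of x and −x. -/
open Set Module

/-- A (possibly empty or improper) face of `P`: the set of maximizers of a linear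
functional over `P` (at level `α`, an upper bound of the functional on `P`). -/
def IsFace {E : Type*} [AddCommGroup E] [Module ℝ E] (P F : Set E) : Prop :=
  ∃ (c : E →ₗ[ℝ] ℝ) (α : ℝ), (∀ x ∈ P, c x ≤ α) ∧ F = {x ∈ P | c x = α}

/-- A facet of the polytope `P`: a nonempty proper face of dimension `dim P - 1`. -/
def IsFacet {E : Type*} [AddCommGroup E] [Module ℝ E] (P F : Set E) : Prop :=
  IsFace P F ∧ F ≠ P ∧ F.Nonempty ∧
    Module.finrank ℝ (vectorSpan ℝ F) + 1 = Module.finrank ℝ (vectorSpan ℝ P)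

/-- A centrally symmetric, weakly Hannar polytope: every pair `{x, -x}` of antipodal
vertices forms a special 1-simplex, i.e. every facet contains exactly one of `x`, `-x`. -/
theorem weaklyHannar_special_one_simplex {n : ℕ} (V : Finset (Fin n → ℝ))
    (P : Set (Fin n → ℝ)) (hP : P = convexHull ℝ (V : Set (Fin n → ℝ)))
    (hsymm : P = {x | -x ∈ P})
    (hhannar : ∀ F : Set (Fin n → ℝ), IsFacet P F →
      P = convexHull ℝ (Set.extremePoints ℝ F ∪ Set.extremePoints ℝ {x | -x ∈ F})) :
    ∀ x ∈ Set.extremePoints ℝ P, ∀ F : Set (Fin n → ℝ), IsFacet P F →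
      Xor' (x ∈ F) (-x ∈ F) := by
  intro x hx F hF
  -- at least one of x, -x is in F
  have hmem : x ∈ F ∨ -x ∈ F := by
    rw [hhannar F hF] at hx
    have := extremePoints_convexHull_subset hx
    rcases this with h | h
    · exact Or.inl h.1
    · exact Or.inr h.1
  -- not both
  have hnotboth : ¬ (x ∈ F ∧ -x ∈ F) := by
    rintro ⟨hxF, hxF'⟩
    obtain ⟨⟨c, α, hub, hFe⟩, hFne, -, -⟩ := hF
    rw [hFe] at hxF hxF'
    have h1 : c x = α := hxF.2
    have h2 : c (-x) = α := hxF'.2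
    have hα : α = 0 := by
      have : c (-x) = -c x := by simp
      linarith [this ▸ h2]
    have hFsubP : {y ∈ P | c y = α} ⊆ P := Set.sep_subset _ _
    have : ¬ P ⊆ F := fun h => hFne (subset_antisymm (hFe ▸ hFsubP) h)
    obtain ⟨p, hpP, hpF⟩ := Set.not_subset.mp this
    have hpne : c p ≠ α := fun h => hpF (hFe ▸ ⟨hpP, h⟩)
    have hplt : c p < 0 := by
      rcases lt_or_eq_of_le (hub p hpP) with h | h
      · linarith [hα ▸ h]
      · exact absurd h hpne
    have hnp : -p ∈ P := by
      have := hsymm ▸ hpP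
      exact this
    have := hub (-p) hnp
    rw [map_neg] at this
    linarith [hα ▸ this]
  rcases hmem with h | h
  · exact Or.inl ⟨h, fun h' => hnotboth ⟨h, h'⟩⟩
  · exact Or.inr ⟨h, fun h' => hnotboth ⟨h', h⟩⟩
end

section
/- Let P be an n-polytope and Σ a special m-simplex of P with vertex set {v₀,…,v_m}. Then for every affine hyperplane H ⊂ ℝ^n containing Σ, there exist vertices of P not in Σ lying strictly on both sides of H. -/
/-!
If every vertex of `P` outside `Σ` lay weakly on one side of `H`, then `H` would be a supporting
hyperplane whose face contains `Σ`. In a full-dimensional polytope every nonempty proper face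
lies in a facet: while the vertices on the supporting hyperplane span less than a hyperplane,
rotate it about their affine span until it meets a further vertex. The resulting facet contains
every vertex of `Σ`, whereas a special simplex has exactly one vertex off each facet.
-/

open Set Module

section LinearAlgebra

variable {K E : Type*} [Field K] [AddCommGroup E] [Module K E]

theorem vectorSpan_le_ker_of_forall_eq {s : Set E} {c : E →ₗ[K] K} {α : K}
    (h : ∀ x ∈ s, c x = α) : vectorSpan K s ≤ LinearMap.ker c := by
  rw [vectorSpan_def, Submodule.span_le]
  rintro _ ⟨x, hx, y, hy, rfl⟩
  simp [vsub_eq_sub, h x hx, h y hy]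

theorem eq_zero_of_forall_eq_of_vectorSpan_eq_top {s : Set E} (hs : vectorSpan K s = ⊤)
    {c : E →ₗ[K] K} {α : K} (h : ∀ x ∈ s, c x = α) : c = 0 :=
  LinearMap.ker_eq_top.1 (top_le_iff.1 (hs ▸ vectorSpan_le_ker_of_forall_eq h))

theorem apply_eq_of_mem_dualAnnihilator_vectorSpan {s : Set E} {d : Module.Dual K E}
    (hd : d ∈ (vectorSpan K s).dualAnnihilator) {x y : E} (hx : x ∈ s) (hy : y ∈ s) :
    d x = d y := by
  have := (Submodule.mem_dualAnnihilator d).1 hd _ (vsub_mem_vectorSpan K hx hy)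
  rwa [vsub_eq_sub, map_sub, sub_eq_zero] at this

variable [FiniteDimensional K E]

theorem finrank_ker_lt {c : E →ₗ[K] K} (hc : c ≠ 0) :
    finrank K (LinearMap.ker c) < finrank K E :=
  Submodule.finrank_lt (mt LinearMap.ker_eq_top.1 hc)

theorem exists_mem_dualAnnihilator_notMem_span_singleton (W : Subspace K E)
    (hW : finrank K W + 2 ≤ finrank K E) (c : Module.Dual K E) :
    ∃ d ∈ W.dualAnnihilator, d ∉ K ∙ c := by
  by_contra! h
  have hle := Submodule.finrank_mono (show W.dualAnnihilator ≤ K ∙ c from h)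
  have hc : finrank K (K ∙ c) ≤ 1 := by
    simpa using finrank_span_le_card (R := K) ({c} : Set (Module.Dual K E))
  have := W.finrank_add_finrank_dualAnnihilator_eq
  omega

end LinearAlgebra

theorem exists_pos_tilt {ι : Type*} (s : Finset ι) {f g : ι → ℝ} {α β : ℝ}
    (hf : ∀ i ∈ s, f i ≤ α) (hfg : ∀ i ∈ s, f i = α → g i = β) (hg : ∃ i ∈ s, β < g i) :
    ∃ t : ℝ, 0 < t ∧ (∀ i ∈ s, f i + t * g i ≤ α + t * β) ∧
      ∃ i ∈ s, f i < α ∧ f i + t * g i = α + t * β := by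
  obtain ⟨i₀, hi₀, hmin⟩ := (s.filter (β < g ·)).exists_min_image
    (fun i => (α - f i) / (g i - β)) (by simpa [Finset.filter_nonempty_iff] using hg)
  obtain ⟨hi₀s, hgi₀⟩ := Finset.mem_filter.1 hi₀
  have hfi₀ : f i₀ < α := (hf i₀ hi₀s).lt_of_ne fun h => hgi₀.ne' (hfg i₀ hi₀s h)
  set t := (α - f i₀) / (g i₀ - β)
  have ht : 0 < t := div_pos (by linarith) (by linarith)
  refine ⟨t, ht, fun i hi => ?_, i₀, hi₀s, hfi₀, ?_⟩
  · rcases lt_or_ge β (g i) with hgi | hgi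
    · have := (le_div_iff₀ (by linarith)).1 (hmin i (Finset.mem_filter.2 ⟨hi, hgi⟩))
      linarith
    · nlinarith [hf i hi]
  · have := div_mul_cancel₀ (α - f i₀) (by linarith : g i₀ - β ≠ 0)
    linarith

section Polytope

variable {E : Type*} [AddCommGroup E] [Module ℝ E]

theorem vectorSpan_convexHull (s : Set E) : vectorSpan ℝ (convexHull ℝ s) = vectorSpan ℝ s := by
  rw [← direction_affineSpan, affineSpan_convexHull, direction_affineSpan]

theorem exists_tilt_of_lt {V : Finset E} {c d : E →ₗ[ℝ] ℝ} {α β : ℝ} (hle : ∀ u ∈ V, c u ≤ α)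
    (hd : d ∉ ℝ ∙ c) (hdβ : ∀ u ∈ V, c u = α → d u = β) (hlt : ∃ u ∈ V, β < d u) :
    ∃ (c' : E →ₗ[ℝ] ℝ) (α' : ℝ), c' ≠ 0 ∧ (∀ u ∈ V, c' u ≤ α') ∧
      (∀ u ∈ V, c u = α → c' u = α') ∧ ∃ u ∈ V, c u < α ∧ c' u = α' := by
  obtain ⟨t, ht, hle', u, hu, huα, hut⟩ := exists_pos_tilt V hle hdβ hlt
  refine ⟨c + t • d, α + t * β, fun h => hd ?_, by simpa using hle',
    fun u hu huα => by simp [huα, hdβ u hu huα], u, hu, huα, by simpa using hut⟩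
  have hneg : t • d = -c := eq_neg_of_add_eq_zero_right h
  rw [Submodule.mem_span_singleton]
  exact ⟨-t⁻¹, by rw [neg_smul, ← smul_neg, ← hneg, smul_smul, inv_mul_cancel₀ ht.ne', one_smul]⟩

variable [FiniteDimensional ℝ E]

theorem isFacet_of_finrank_add_one {s : Set E} (hs : vectorSpan ℝ s = ⊤) {c : E →ₗ[ℝ] ℝ}
    (hc : c ≠ 0) {α : ℝ} (hle : ∀ u ∈ s, c u ≤ α) (hne : ∃ u ∈ s, c u = α)
    (hrank : finrank ℝ (vectorSpan ℝ {u ∈ s | c u = α}) + 1 = finrank ℝ E) :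
    IsFacet (convexHull ℝ s) {x ∈ convexHull ℝ s | c x = α} := by
  have hP : finrank ℝ (vectorSpan ℝ (convexHull ℝ s)) = finrank ℝ E := by
    rw [vectorSpan_convexHull, hs, finrank_top]
  have hF : finrank ℝ (vectorSpan ℝ {x ∈ convexHull ℝ s | c x = α}) + 1 = finrank ℝ E := by
    have hlower := Submodule.finrank_mono (vectorSpan_mono ℝ
      (show {u ∈ s | c u = α} ⊆ {x ∈ convexHull ℝ s | c x = α} from
        fun u hu => ⟨subset_convexHull ℝ s hu.1, hu.2⟩))
    have hupper := Submodule.finrank_mono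
      (vectorSpan_le_ker_of_forall_eq (s := {x ∈ convexHull ℝ s | c x = α}) fun x hx => hx.2)
    have := finrank_ker_lt hc
    omega
  obtain ⟨u, hu, huα⟩ := hne
  refine ⟨⟨c, α, convexHull_min hle (convex_halfSpace_le c.isLinear α), rfl⟩, fun h => ?_,
    ⟨u, subset_convexHull ℝ s hu, huα⟩, hF.trans hP.symm⟩
  rw [h, hP] at hF
  omega

theorem exists_tilt_of_finrank_add_two_le {V : Finset E} (hV : vectorSpan ℝ (V : Set E) = ⊤)
    {c : E →ₗ[ℝ] ℝ} {α : ℝ} (hle : ∀ u ∈ V, c u ≤ α) {p : E} (hp : p ∈ V) (hpα : c p = α)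
    (hrank : finrank ℝ (vectorSpan ℝ {u ∈ (V : Set E) | c u = α}) + 2 ≤ finrank ℝ E) :
    ∃ (c' : E →ₗ[ℝ] ℝ) (α' : ℝ), c' ≠ 0 ∧ (∀ u ∈ V, c' u ≤ α') ∧
      (∀ u ∈ V, c u = α → c' u = α') ∧ ∃ u ∈ V, c u < α ∧ c' u = α' := by
  obtain ⟨d, hdW, hd⟩ := exists_mem_dualAnnihilator_notMem_span_singleton _ hrank c
  have hdp : ∀ u ∈ V, c u = α → d u = d p := fun u hu huα =>
    apply_eq_of_mem_dualAnnihilator_vectorSpan hdW ⟨hu, huα⟩ ⟨hp, hpα⟩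
  obtain ⟨u, hu, hdu⟩ : ∃ u ∈ V, d u ≠ d p := by
    by_contra! h
    exact hd (eq_zero_of_forall_eq_of_vectorSpan_eq_top hV h ▸ Submodule.zero_mem _)
  rcases hdu.lt_or_gt with hlt | hgt
  · exact exists_tilt_of_lt (β := -d p) hle (by rwa [Submodule.neg_mem_iff])
      (fun u hu huα => by simp [hdp u hu huα]) ⟨u, hu, by simpa using hlt⟩
  · exact exists_tilt_of_lt hle hd hdp ⟨u, hu, hgt⟩

theorem exists_isFacet_supset_of_supporting {V : Finset E} (hV : vectorSpan ℝ (V : Set E) = ⊤)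
    {c : E →ₗ[ℝ] ℝ} (hc : c ≠ 0) {α : ℝ} (hle : ∀ u ∈ V, c u ≤ α) {p : E} (hp : p ∈ V)
    (hpα : c p = α) :
    ∃ F, IsFacet (convexHull ℝ (V : Set E)) F ∧ ∀ u ∈ V, c u = α → u ∈ F := by
  induction hk : (V.filter (c · ≠ α)).card using Nat.strong_induction_on generalizing c α with
  | _ k ih =>
  have hlt : finrank ℝ (vectorSpan ℝ {u ∈ (V : Set E) | c u = α}) < finrank ℝ E :=
    (Submodule.finrank_mono (vectorSpan_le_ker_of_forall_eq fun _ hx => hx.2)).trans_lt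
      (finrank_ker_lt hc)
  by_cases hrank : finrank ℝ (vectorSpan ℝ {u ∈ (V : Set E) | c u = α}) + 1 = finrank ℝ E
  · exact ⟨_, isFacet_of_finrank_add_one hV hc hle ⟨p, hp, hpα⟩ hrank,
      fun u hu huα => ⟨subset_convexHull ℝ _ hu, huα⟩⟩
  obtain ⟨c', α', hc', hle', hsub, u, hu, huα, hu'⟩ :=
    exists_tilt_of_finrank_add_two_le hV hle hp hpα (by omega)
  have hfewer : V.filter (c' · ≠ α') ⊂ V.filter (c · ≠ α) := by
    refine (Finset.ssubset_iff_of_subset fun x hx => ?_).2 ⟨u, ?_, ?_⟩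
    · simp only [Finset.mem_filter] at hx ⊢
      exact ⟨hx.1, fun h => hx.2 (hsub x hx.1 h)⟩
    · simpa [hu] using huα.ne
    · simp [hu']
  obtain ⟨F, hF, hVF⟩ :=
    ih _ (hk ▸ Finset.card_lt_card hfewer) hc' hle' (hsub p hp hpα) rfl
  exact ⟨F, hF, fun u hu huα => hVF u hu (hsub u hu huα)⟩

end Polytope

theorem special_simplex_hyperplane_separates_general {n m : ℕ}
    (V : Finset (Fin n → ℝ)) (P : Set (Fin n → ℝ))
    (hP : P = convexHull ℝ (V : Set (Fin n → ℝ)))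
    (hfull : Module.finrank ℝ (vectorSpan ℝ P) = n)
    (v : Fin (m + 1) → (Fin n → ℝ))
    (hvV : ∀ i, v i ∈ V)
    (hspec : ∀ F : Set (Fin n → ℝ), IsFacet P F → ∃! i, v i ∉ F) :
    ∀ (c : (Fin n → ℝ) →ₗ[ℝ] ℝ) (α : ℝ), c ≠ 0 → (∀ i, c (v i) = α) →
      (∃ u ∈ V, u ∉ Set.range v ∧ α < c u) ∧
      (∃ u ∈ V, u ∉ Set.range v ∧ c u < α) := by
  subst hP
  have hV : vectorSpan ℝ (V : Set (Fin n → ℝ)) = ⊤ :=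
    Submodule.eq_top_of_finrank_eq (by rwa [← vectorSpan_convexHull, finrank_fin_fun])
  have above : ∀ (c : (Fin n → ℝ) →ₗ[ℝ] ℝ) (α : ℝ), c ≠ 0 → (∀ i, c (v i) = α) →
      ∃ u ∈ V, u ∉ Set.range v ∧ α < c u := by
    intro c α hc hvα
    by_contra! hle
    obtain ⟨F, hF, hVF⟩ := exists_isFacet_supset_of_supporting hV hc
      (fun u hu => (em (u ∈ Set.range v)).elim (by rintro ⟨i, rfl⟩; exact (hvα i).le) (hle u hu))
      (hvV 0) (hvα 0)
    obtain ⟨i, hi, -⟩ := hspec F hF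
    exact hi (hVF _ (hvV i) (hvα i))
  intro c α hc hvα
  obtain ⟨u, hu, huv, hlt⟩ := above (-c) (-α) (neg_ne_zero.2 hc) (by simp [hvα])
  exact ⟨above c α hc hvα, u, hu, huv, by simpa using hlt⟩

/-- If $\Sigma$ is a special $m$-simplex of the $n$-polytope $P$, then every affine
hyperplane containing $\Sigma$ has vertices of $P$ outside $\Sigma$ strictly on both
sides. -/
theorem special_simplex_hyperplane_separates {n m : ℕ}
    (V : Finset (Fin n → ℝ)) (P : Set (Fin n → ℝ))
    (hP : P = convexHull ℝ (V : Set (Fin n → ℝ)))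
    (hfull : Module.finrank ℝ (vectorSpan ℝ P) = n)
    (v : Fin (m + 1) → (Fin n → ℝ)) (hv : AffineIndependent ℝ v)
    (hvV : ∀ i, v i ∈ V) (hm : m + 1 ≤ n)
    (hspec : ∀ F : Set (Fin n → ℝ), IsFacet P F → ∃! i, v i ∉ F) :
    ∀ (c : (Fin n → ℝ) →ₗ[ℝ] ℝ) (α : ℝ), c ≠ 0 → (∀ i, c (v i) = α) →
      (∃ u ∈ V, u ∉ Set.range v ∧ α < c u) ∧
      (∃ u ∈ V, u ∉ Set.range v ∧ c u < α) :=
  special_simplex_hyperplane_separates_general V P hP hfull v hvV hspec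
end

section
/- Let P be an n-polytope with special m-simplex Σ with vertex set V(Σ), and let w ∉ aff(P) ⊂ ℝ^{n+1}. Then the pyramid pyr(P) = conv(P ∪ {w}) is an (n+1)-polytope and conv(V(Σ) ∪ {w}) is a special (m+1)-simplex of pyr(P). -/
open Set Module

/-- The number of nonempty proper faces of `P` of dimension `i`. -/
noncomputable def nF {E : Type*} [AddCommGroup E] [Module ℝ E] (P : Set E) (i : ℕ) : ℕ :=
  Set.ncard {F : Set E | IsFace P F ∧ F ≠ P ∧ F.Nonempty ∧
    Module.finrank ℝ (vectorSpan ℝ F) = i}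


/-! A linear functional `c` bounded by `α` on `conv S` attains `α` exactly on the hull of the
points of `S` where it does. So a facet of `pyr(P) = conv (P ∪ {w})` either misses the apex, and
then lies in `P` and, having full dimension there, is `P` itself; or it contains the apex and is the
pyramid over `F ∩ P`, which is then a facet of `P` (or empty, when `P` is a point). The vertices of
`Σ` lie in `P`, so the vertex of `conv (V(Σ) ∪ {w})` missing from a facet is `w` in the first case
and the vertex of `Σ` missing from `F ∩ P` in the second. -/

theorem finrank_vectorSpan_insert_of_notMem_affineSpan {k V P : Type*} [DivisionRing k]
    [AddCommGroup V] [Module k V] [Module.Finite k V] [AddTorsor V P] {s : Set P} (hs : s.Nonempty)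
    {p : P} (hp : p ∉ affineSpan k s) :
    finrank k (vectorSpan k (insert p s)) = finrank k (vectorSpan k s) + 1 := by
  obtain ⟨q, hq⟩ := hs
  have hq' : q ∈ affineSpan k s := subset_affineSpan k s hq
  rw [← direction_affineSpan, ← affineSpan_insert_affineSpan,
    AffineSubspace.direction_affineSpan_insert hq', sup_comm,
    Submodule.finrank_sup_span_singleton, direction_affineSpan]
  rwa [AffineSubspace.vsub_right_mem_direction_iff_mem hq']

theorem AffineIndependent.snoc {k V P : Type*} [DivisionRing k] [AddCommGroup V] [Module k V]
    [AddTorsor V P] {n : ℕ} {v : Fin n → P} (hv : AffineIndependent k v) {p : P}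
    (hp : p ∉ affineSpan k (range v)) : AffineIndependent k (Fin.snoc v p : Fin (n + 1) → P) := by
  refine affineIndependent_of_notMem_span (k := k) (p := (Fin.snoc v p : Fin (n + 1) → P))
    (i := Fin.last n) ?_ ?_
  · refine (affineIndependent_equiv (k := k) (finSuccAboveEquiv (Fin.last n))).1 ?_
    convert hv
    ext i
    simp [finSuccAboveEquiv_apply]
  · rw [Fin.snoc_last]
    refine fun h => hp (affineSpan_mono k ?_ h)
    rintro _ ⟨i, hi, rfl⟩
    obtain ⟨j, rfl⟩ := Fin.exists_castSucc_eq.2 hi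
    exact ⟨j, by simp⟩

theorem Fin.existsUnique_snoc_of_existsUnique {α : Type*} {n : ℕ} {v : Fin n → α} {a : α}
    {p : α → Prop} (ha : ¬ p a) (hv : ∃! i, p (v i)) :
    ∃! i, p ((Fin.snoc v a : Fin (n + 1) → α) i) := by
  obtain ⟨i, hi, huniq⟩ := hv
  refine ⟨i.castSucc, by simpa using hi, Fin.lastCases (by simp [ha]) fun j hj => ?_⟩
  rw [huniq j (by simpa using hj)]

theorem Fin.existsUnique_snoc_of_forall_not {α : Type*} {n : ℕ} {v : Fin n → α} {a : α}
    {p : α → Prop} (ha : p a) (hv : ∀ i, ¬ p (v i)) :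
    ∃! i, p ((Fin.snoc v a : Fin (n + 1) → α) i) :=
  ⟨Fin.last n, by simpa using ha,
    Fin.lastCases (fun _ => rfl) fun j hj => absurd (by simpa using hj) (hv j)⟩

section Convex

variable {E : Type*} [AddCommGroup E] [Module ℝ E]

theorem sep_convexHull_eq_convexHull_sep {s : Set E} {c : E →ₗ[ℝ] ℝ} {α : ℝ}
    (hc : ∀ x ∈ s, c x ≤ α) :
    {x ∈ convexHull ℝ s | c x = α} = convexHull ℝ {x ∈ s | c x = α} := by
  refine Subset.antisymm ?_ (convexHull_min (fun x hx => ⟨subset_convexHull ℝ s hx.1, hx.2⟩)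
    ((convex_convexHull ℝ s).inter (convex_hyperplane c.isLinear α)))
  classical
  rintro x ⟨hx, hcx⟩
  rw [convexHull_eq] at hx
  obtain ⟨ι, t, a, z, ha, hsum, hz, rfl⟩ := hx
  -- `α - c x` is a sum of nonnegative terms, so each point of positive weight attains `α`
  have hdefect : ∑ i ∈ t, a i * (α - c (z i)) = 0 := by
    simp only [Finset.centerMass_eq_of_sum_1 _ _ hsum, map_sum, map_smul, smul_eq_mul] at hcx
    simp only [mul_sub, Finset.sum_sub_distrib, ← Finset.sum_mul, hsum, one_mul, hcx, sub_self]
  have hlevel : ∀ i ∈ t, a i ≠ 0 → c (z i) = α := fun i hi hai => by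
    have := (Finset.sum_eq_zero_iff_of_nonneg fun j hj =>
      mul_nonneg (ha j hj) (sub_nonneg.2 (hc _ (hz j hj)))).1 hdefect i hi
    exact (sub_eq_zero.1 ((mul_eq_zero.1 this).resolve_left hai)).symm
  rw [← Finset.centerMass_filter_ne_zero]
  refine Finset.centerMass_mem_convexHull _ (fun i hi => ha i (Finset.mem_filter.1 hi).1) ?_
    fun i hi => ⟨hz i (Finset.mem_filter.1 hi).1, hlevel i (Finset.mem_filter.1 hi).1
      (Finset.mem_filter.1 hi).2⟩
  rw [Finset.sum_filter_ne_zero, hsum]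
  exact one_pos

theorem sep_eq_self_of_finrank_vectorSpan_eq [FiniteDimensional ℝ E] {P : Set E} {c : E →ₗ[ℝ] ℝ}
    {α : ℝ} (hne : {x ∈ P | c x = α}.Nonempty)
    (hdim : finrank ℝ (vectorSpan ℝ {x ∈ P | c x = α}) = finrank ℝ (vectorSpan ℝ P)) :
    {x ∈ P | c x = α} = P := by
  obtain ⟨q, hqP, hq⟩ := hne
  have hspan : vectorSpan ℝ {x ∈ P | c x = α} = vectorSpan ℝ P :=
    Submodule.eq_of_le_of_finrank_le (vectorSpan_mono ℝ (sep_subset _ _)) hdim.ge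
  have hker : vectorSpan ℝ {x ∈ P | c x = α} ≤ LinearMap.ker c := by
    rw [vectorSpan_def, Submodule.span_le]
    rintro _ ⟨x, ⟨-, hx⟩, y, ⟨-, hy⟩, rfl⟩
    simp [hx, hy]
  refine (sep_subset _ _).antisymm fun x hx => ⟨hx, ?_⟩
  have := hker (hspan ▸ vsub_mem_vectorSpan ℝ hx hqP)
  rwa [LinearMap.mem_ker, vsub_eq_sub, map_sub, sub_eq_zero, hq] at this

variable {P F : Set E} {w : E}

def pyramid (P : Set E) (w : E) : Set E := convexHull ℝ (P ∪ {w})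

theorem subset_pyramid : P ⊆ pyramid P w :=
  subset_union_left.trans (subset_convexHull ℝ _)

theorem apex_mem_pyramid : w ∈ pyramid P w :=
  subset_convexHull ℝ _ (mem_union_right _ rfl)

theorem finrank_vectorSpan_pyramid [FiniteDimensional ℝ E] (hP : P.Nonempty)
    (hw : w ∉ affineSpan ℝ P) :
    finrank ℝ (vectorSpan ℝ (pyramid P w)) = finrank ℝ (vectorSpan ℝ P) + 1 := by
  rw [pyramid, ← direction_affineSpan, affineSpan_convexHull, direction_affineSpan,
    union_singleton, finrank_vectorSpan_insert_of_notMem_affineSpan hP hw]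

theorem IsFacet.eq_base_of_apex_notMem [FiniteDimensional ℝ E] (hF : IsFacet (pyramid P w) F)
    (hP : Convex ℝ P) (hw : w ∉ affineSpan ℝ P) (hwF : w ∉ F) : F = P := by
  obtain ⟨⟨c, α, hc, rfl⟩, -, hne, hdim⟩ := hF
  have hlt : c w < α := (hc w apex_mem_pyramid).lt_of_ne fun h => hwF ⟨apex_mem_pyramid, h⟩
  have hbase : {x ∈ pyramid P w | c x = α} = {x ∈ P | c x = α} := by
    have hlevel : {x ∈ P ∪ {w} | c x = α} = {x ∈ P | c x = α} := by
      ext x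
      constructor
      · rintro ⟨hx | rfl, hcx⟩
        exacts [⟨hx, hcx⟩, absurd hcx hlt.ne]
      · exact fun ⟨hx, hcx⟩ => ⟨Or.inl hx, hcx⟩
    rw [pyramid, sep_convexHull_eq_convexHull_sep fun x hx => hc x (subset_convexHull ℝ _ hx),
      hlevel]
    exact (hP.inter (convex_hyperplane c.isLinear α)).convexHull_eq
  rw [hbase] at hne hdim ⊢
  refine sep_eq_self_of_finrank_vectorSpan_eq hne ?_
  rw [finrank_vectorSpan_pyramid (hne.mono (sep_subset _ _)) hw] at hdim
  omega

theorem IsFacet.inter_isFacet_or_eq_singleton [FiniteDimensional ℝ E]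
    (hF : IsFacet (pyramid P w) F) (hw : w ∉ affineSpan ℝ P) (hwF : w ∈ F) :
    IsFacet P (F ∩ P) ∨ F = {w} := by
  obtain ⟨⟨c, α, hc, rfl⟩, -, -, hdim⟩ := hF
  have hinter : {x ∈ pyramid P w | c x = α} ∩ P = {x ∈ P | c x = α} := by
    ext x
    exact ⟨fun h => ⟨h.2, h.1.2⟩, fun h => ⟨⟨subset_pyramid h.1, h.2⟩, h.1⟩⟩
  have hface : {x ∈ pyramid P w | c x = α} = convexHull ℝ (insert w {x ∈ P | c x = α}) := by
    rw [pyramid, sep_convexHull_eq_convexHull_sep fun x hx => hc x (subset_convexHull ℝ _ hx)]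
    congr 1
    ext x
    constructor
    · rintro ⟨hx | rfl, hcx⟩
      exacts [Or.inr ⟨hx, hcx⟩, Or.inl rfl]
    · rintro (rfl | ⟨hx, hcx⟩)
      exacts [⟨Or.inr rfl, hwF.2⟩, ⟨Or.inl hx, hcx⟩]
  rw [hinter]
  rcases eq_empty_or_nonempty {x ∈ P | c x = α} with hempty | hne
  · right
    rw [hface, hempty, insert_empty_eq, convexHull_singleton]
  · left
    have hw' : w ∉ affineSpan ℝ {x ∈ P | c x = α} :=
      fun h => hw (affineSpan_mono ℝ (sep_subset _ _) h)
    rw [hface, ← direction_affineSpan, affineSpan_convexHull, direction_affineSpan,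
      finrank_vectorSpan_insert_of_notMem_affineSpan hne hw',
      finrank_vectorSpan_pyramid (hne.mono (sep_subset _ _)) hw, add_left_inj] at hdim
    refine ⟨⟨c, α, fun x hx => hc x (subset_pyramid hx), rfl⟩, fun h => ?_, hne, by rw [hdim]⟩
    rw [h] at hdim
    omega

end Convex

/-- Taking the pyramid over an $n$-polytope $P$ with special $m$-simplex $\Sigma$
(apex $w$ outside the affine hull of $P$) yields an $(n+1)$-polytope in which
$\mathrm{conv}(V(\Sigma) \cup \{w\})$ is a special $(m+1)$-simplex. -/
theorem pyramid_special_simplex {n m : ℕ}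
    (V : Finset (Fin (n + 1) → ℝ)) (P : Set (Fin (n + 1) → ℝ))
    (hP : P = convexHull ℝ (V : Set (Fin (n + 1) → ℝ)))
    (hdim : Module.finrank ℝ (vectorSpan ℝ P) = n)
    (v : Fin (m + 1) → (Fin (n + 1) → ℝ)) (hv : AffineIndependent ℝ v)
    (hvV : ∀ i, v i ∈ V)
    (hspec : ∀ F : Set (Fin (n + 1) → ℝ), IsFacet P F → ∃! i, v i ∉ F)
    (w : Fin (n + 1) → ℝ) (hw : w ∉ affineSpan ℝ P) :
    Module.finrank ℝ (vectorSpan ℝ (convexHull ℝ (P ∪ {w}))) = n + 1 ∧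
    AffineIndependent ℝ (Fin.snoc v w : Fin (m + 1 + 1) → (Fin (n + 1) → ℝ)) ∧
    ∀ F : Set (Fin (n + 1) → ℝ), IsFacet (convexHull ℝ (P ∪ {w})) F →
      ∃! i : Fin (m + 1 + 1), (Fin.snoc v w : Fin (m + 1 + 1) → (Fin (n + 1) → ℝ)) i ∉ F := by
  have hPconv : Convex ℝ P := hP ▸ convex_convexHull ℝ _
  have hvP : ∀ i, v i ∈ P := fun i => hP ▸ subset_convexHull ℝ _ (hvV i)
  have hwP : w ∉ P := fun h => hw (subset_affineSpan ℝ P h)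
  have hdimQ : finrank ℝ (vectorSpan ℝ (convexHull ℝ (P ∪ {w}))) = n + 1 :=
    (finrank_vectorSpan_pyramid ⟨v 0, hvP 0⟩ hw).trans (congrArg (· + 1) hdim)
  refine ⟨hdimQ, hv.snoc fun h => hw (affineSpan_mono ℝ (range_subset_iff.2 hvP) h),
    fun F hF => ?_⟩
  by_cases hwF : w ∈ F
  · refine Fin.existsUnique_snoc_of_existsUnique (p := (· ∉ F)) (not_not.2 hwF) ?_
    rcases hF.inter_isFacet_or_eq_singleton hw hwF with hfacet | rfl
    · simpa [hvP] using hspec _ hfacet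
    · have hn : n = 0 := by
        have := hF.2.2.2
        rw [vectorSpan_singleton, finrank_bot, hdimQ] at this
        omega
      have hm : m = 0 := by
        have := Submodule.finrank_mono (vectorSpan_mono ℝ (range_subset_iff.2 hvP))
        rwa [hv.finrank_vectorSpan (Fintype.card_fin _), hdim, hn, Nat.le_zero] at this
      subst hm
      exact ⟨0, fun h => hwP (h ▸ hvP 0), fun j _ => Fin.fin_one_eq_zero j⟩
  · rw [hF.eq_base_of_apex_notMem hPconv hw hwF]
    exact Fin.existsUnique_snoc_of_forall_not (p := (· ∉ P)) hwP fun i => not_not.2 (hvP i)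
end
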